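/- arXiv:2412.05706 — 2 statements merged into one kernel-verified Lean document; each statement's English description precedes it below -/
import Mathlib

section
/- For every dimension d ≥ 7 there exists a constant C > 0 such that for all x, y ∈ ℤ^d, the sum over z ∈ ℤ^d of (max(|x−z|,1))^{2−d} · (max(|z−y|,1))^{2−d} is at most C · (max(|x−y|,1))^{4−d}, where |·| denotes the Euclidean norm. -/
/-!
Write `M = |x - y| + 1`. If `a = |x - z| ≤ |z - y|`, the triangle inequality makes `|z - y|`
comparable to `a + M`, so the summand is `≲ ((a + 1) (a + 1 + M)) ^ (2 - d)`, a decreasing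
kernel of `|x - z|` alone (symmetrically of `|z - y|`). Summed over the `O(k ^ (d - 1))` lattice
points of sup-norm `k`, it gives
`∑ k (k + M) ^ (2 - d) ≤ M ^ (5 - d) ∑ (k + M) ^ (-2) ≤ M ^ (4 - d)`, the first step because
`5 - d ≤ 0`.
-/

open scoped BigOperators

/-- The Euclidean norm of a point of the integer lattice `ℤ^d`. -/
noncomputable def latNorm {d : ℕ} (x : Fin d → ℤ) : ℝ :=
  Real.sqrt (∑ i, ((x i : ℝ)) ^ 2)

open Finset

section LatticeBox

variable {ι : Type*} [Fintype ι] [DecidableEq ι]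

variable (ι) in
noncomputable def latticeBox (n : ℕ) : Finset (ι → ℤ) :=
  Fintype.piFinset fun _ => Icc (-n : ℤ) n

lemma mem_latticeBox {n : ℕ} {w : ι → ℤ} : w ∈ latticeBox ι n ↔ ∀ i, |w i| ≤ n := by
  simp [latticeBox, abs_le]

lemma latticeBox_mono : Monotone (latticeBox ι) := fun _ _ h _ hw =>
  mem_latticeBox.2 fun i => (mem_latticeBox.1 hw i).trans (by exact_mod_cast h)

lemma latticeBox_zero : latticeBox ι 0 = {0} := by
  ext w
  simp [mem_latticeBox, funext_iff]

lemma card_latticeBox_succ_sdiff_le (k : ℕ) :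
    #(latticeBox ι (k + 1) \ latticeBox ι k) ≤
      2 * Fintype.card ι * (2 * k + 3) ^ (Fintype.card ι - 1) := by
  rw [card_sdiff_of_subset (latticeBox_mono k.le_succ)]
  simp only [latticeBox, Fintype.card_piFinset, Int.card_Icc, prod_const, card_univ]
  grind [abs_pow_sub_pow_le (α := ℤ) (2 * k + 3) (2 * k + 1) (Fintype.card ι)]

lemma le_norm_of_mem_latticeBox_succ_sdiff {k : ℕ} {w : ι → ℤ}
    (hw : w ∈ latticeBox ι (k + 1) \ latticeBox ι k) : (k + 1 : ℝ) ≤ ‖w‖ := by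
  obtain ⟨j, hj⟩ : ∃ j, ¬|w j| ≤ k := by simpa [mem_latticeBox] using (mem_sdiff.1 hw).2
  calc (k + 1 : ℝ) ≤ |(w j : ℝ)| := by exact_mod_cast (by omega : (k + 1 : ℤ) ≤ |w j|)
    _ = ‖w j‖ := (Int.norm_eq_abs _).symm
    _ ≤ ‖w‖ := norm_le_pi_norm w j

lemma exists_subset_latticeBox (s : Finset (ι → ℤ)) : ∃ n, s ⊆ latticeBox ι n := by
  refine ⟨s.sup fun w => univ.sup fun i => (w i).natAbs, fun w hw => mem_latticeBox.2 fun i => ?_⟩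
  have hi : (w i).natAbs ≤ univ.sup fun i => (w i).natAbs :=
    le_sup (f := fun i => (w i).natAbs) (mem_univ i)
  have hw : (univ.sup fun i => (w i).natAbs) ≤ s.sup fun w => univ.sup fun i => (w i).natAbs :=
    le_sup (f := fun w => univ.sup fun i => (w i).natAbs) hw
  rw [Int.abs_eq_natAbs]
  exact_mod_cast hi.trans hw

variable {φ : ℝ → ℝ}

lemma sum_latticeBox_le [Nonempty ι] (hφ : AntitoneOn φ (Set.Ici 0))
    (hφ₀ : ∀ t, 0 ≤ t → 0 ≤ φ t) (n : ℕ) :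
    ∑ w ∈ latticeBox ι n, φ ‖w‖ ≤
      2 * Fintype.card ι * ∑ k ∈ range (n + 1), (2 * k + 1 : ℝ) ^ (Fintype.card ι - 1) * φ k := by
  induction n with
  | zero =>
    simp only [latticeBox_zero, sum_singleton, norm_zero, zero_add, range_one, CharP.cast_eq_zero,
      mul_zero, one_pow, one_mul]
    have hcard : (1 : ℝ) ≤ Fintype.card ι := by exact_mod_cast Fintype.card_pos
    exact le_mul_of_one_le_left (hφ₀ 0 le_rfl) (by linarith)
  | succ n ih =>
    rw [← union_sdiff_of_subset (latticeBox_mono n.le_succ), sum_union disjoint_sdiff,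
      sum_range_succ, mul_add]
    refine add_le_add ih ?_
    have hshell : ∀ w ∈ latticeBox ι (n + 1) \ latticeBox ι n, φ ‖w‖ ≤ φ (n + 1 : ℕ) := fun w hw =>
      hφ (Set.mem_Ici.2 (Nat.cast_nonneg _)) (norm_nonneg w)
        (by exact_mod_cast le_norm_of_mem_latticeBox_succ_sdiff hw)
    calc ∑ w ∈ latticeBox ι (n + 1) \ latticeBox ι n, φ ‖w‖
        ≤ #(latticeBox ι (n + 1) \ latticeBox ι n) * φ (n + 1 : ℕ) := by
          simpa using sum_le_card_nsmul _ _ _ hshell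
      _ ≤ ((2 * Fintype.card ι * (2 * n + 3) ^ (Fintype.card ι - 1) : ℕ) : ℝ) * φ (n + 1 : ℕ) := by
          gcongr
          · exact hφ₀ _ (Nat.cast_nonneg _)
          · exact_mod_cast card_latticeBox_succ_sdiff_le n
      _ = _ := by push_cast; ring

lemma summable_and_tsum_le_of_sum_latticeBox_le [Nonempty ι] (hφ : AntitoneOn φ (Set.Ici 0))
    (hφ₀ : ∀ t, 0 ≤ t → 0 ≤ φ t) {B : ℝ}
    (hB : ∀ n, 2 * Fintype.card ι *
      ∑ k ∈ range (n + 1), (2 * k + 1 : ℝ) ^ (Fintype.card ι - 1) * φ k ≤ B) (c : ι → ℤ) :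
    Summable (fun z => φ ‖z - c‖) ∧ ∑' z, φ ‖z - c‖ ≤ B := by
  have hsum : ∀ s : Finset (ι → ℤ), ∑ w ∈ s, φ ‖w‖ ≤ B := fun s => by
    obtain ⟨n, hn⟩ := exists_subset_latticeBox s
    exact (sum_le_sum_of_subset_of_nonneg hn fun w _ _ => hφ₀ _ (norm_nonneg w)).trans
      ((sum_latticeBox_le hφ hφ₀ n).trans (hB n))
  have hs : Summable fun w : ι → ℤ => φ ‖w‖ :=
    summable_of_sum_le (fun w => hφ₀ _ (norm_nonneg w)) hsum
  refine ⟨(Equiv.subRight c).summable_iff.2 hs, ?_⟩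
  calc ∑' z, φ ‖z - c‖ = ∑' w, φ ‖w‖ := (Equiv.subRight c).tsum_eq fun w => φ ‖w‖
    _ ≤ B := hs.tsum_le_of_sum_le hsum

end LatticeBox

section LatNorm

variable {d : ℕ}

lemma latNorm_nonneg (w : Fin d → ℤ) : 0 ≤ latNorm w := Real.sqrt_nonneg _

lemma latNorm_eq_norm (w : Fin d → ℤ) :
    latNorm w = ‖WithLp.toLp 2 (fun i => (w i : ℝ))‖ := by
  simp [latNorm, EuclideanSpace.norm_eq]

lemma latNorm_add_le (u v : Fin d → ℤ) : latNorm (u + v) ≤ latNorm u + latNorm v := by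
  calc latNorm (u + v)
        = ‖WithLp.toLp 2 (fun i => (u i : ℝ)) + WithLp.toLp 2 fun i => (v i : ℝ)‖ := by
        rw [latNorm_eq_norm, ← WithLp.toLp_add]
        congr 2
        funext i
        simp
    _ ≤ latNorm u + latNorm v := by rw [latNorm_eq_norm, latNorm_eq_norm]; exact norm_add_le _ _

lemma norm_le_latNorm (w : Fin d → ℤ) : ‖w‖ ≤ latNorm w :=
  (pi_norm_le_iff_of_nonneg (latNorm_nonneg w)).2 fun i => by
    rw [Int.norm_eq_abs]
    exact Real.abs_le_sqrt (single_le_sum (f := fun i => ((w i : ℝ)) ^ 2)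
      (fun j _ => sq_nonneg _) (mem_univ i))

end LatNorm

noncomputable def convKernel (s M t : ℝ) : ℝ := ((t + 1) * (t + 1 + M)) ^ s

section ConvKernel

variable {s M : ℝ}

lemma convKernel_nonneg (hM : 0 ≤ M) {t : ℝ} (ht : 0 ≤ t) : 0 ≤ convKernel s M t :=
  Real.rpow_nonneg (by positivity) s

lemma antitoneOn_convKernel (hs : s ≤ 0) (hM : 0 ≤ M) : AntitoneOn (convKernel s M) (Set.Ici 0) :=
  fun a ha b _ hab => by
    simp only [Set.mem_Ici] at ha
    exact Real.rpow_le_rpow_of_nonpos (by positivity) (by gcongr; linarith) hs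

lemma max_one_mul_rpow_le (hs : s ≤ 0) {a b m : ℝ} (ha : 0 ≤ a) (hb : 0 ≤ b) (hm : 0 ≤ m)
    (hab : m ≤ a + b) :
    (max a 1 * max b 1) ^ s ≤
      12 ^ (-s) * (convKernel s (m + 1) a + convKernel s (m + 1) b) := by
  wlog h : a ≤ b generalizing a b
  · simpa only [mul_comm, add_comm] using this hb ha (by linarith) (by linarith)
  -- `b ≥ a` and `2 b ≥ m`
  have hlow : (a + 1) * (a + 1 + (m + 1)) / 12 ≤ max a 1 * max b 1 := by
    have h1 : (a + 1) / 2 ≤ max a 1 := by rcases le_total a 1 <;> simp [*] <;> linarith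
    have h2 : (a + 1 + (m + 1)) / 6 ≤ max b 1 := by rcases le_total b 1 <;> simp [*] <;> linarith
    calc (a + 1) * (a + 1 + (m + 1)) / 12 = (a + 1) / 2 * ((a + 1 + (m + 1)) / 6) := by ring
      _ ≤ max a 1 * max b 1 := mul_le_mul h1 h2 (by positivity) (by positivity)
  calc (max a 1 * max b 1) ^ s ≤ ((a + 1) * (a + 1 + (m + 1)) / 12) ^ s :=
        Real.rpow_le_rpow_of_nonpos (by positivity) hlow hs
    _ = 12 ^ (-s) * convKernel s (m + 1) a := by
        rw [Real.div_rpow (by positivity) (by norm_num), Real.rpow_neg (by norm_num), convKernel]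
        ring
    _ ≤ _ := by
        gcongr
        exact le_add_of_nonneg_right (convKernel_nonneg (by linarith) hb)

lemma sum_range_inv_sq_add_le (hM : 0 < M) (n : ℕ) :
    ∑ k ∈ range n, ((k + 1 + M) ^ 2)⁻¹ ≤ M⁻¹ := by
  have htel : ∀ k : ℕ, ((k + 1 + M) ^ 2)⁻¹ ≤ (k + M)⁻¹ - ((k + 1 : ℕ) + M)⁻¹ := fun k => by
    push_cast
    rw [inv_sub_inv (by positivity) (by positivity), add_sub_add_right_eq_sub, add_sub_cancel_left,
      one_div, sq]
    exact inv_anti₀ (by positivity) (by gcongr; linarith)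
  calc ∑ k ∈ range n, ((k + 1 + M) ^ 2)⁻¹ ≤ ∑ k ∈ range n, ((k + M)⁻¹ - ((k + 1 : ℕ) + M)⁻¹) :=
        sum_le_sum fun k _ => htel k
    _ = M⁻¹ - (n + M)⁻¹ := by rw [sum_range_sub' (fun k : ℕ => ((k : ℝ) + M)⁻¹)]; simp
    _ ≤ M⁻¹ := by simp only [sub_le_self_iff, inv_nonneg]; positivity

lemma pow_mul_convKernel_le {d : ℕ} (h₁ : 1 - d ≤ s) (h₂ : 2 * s ≤ -1 - d) (hM : 0 < M)
    {t : ℝ} (ht : 0 ≤ t) :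
    (2 * t + 1) ^ (d - 1) * convKernel s M t ≤
      2 ^ (d - 1) * M ^ ((d : ℝ) + 1 + 2 * s) * ((t + 1 + M) ^ 2)⁻¹ := by
  have hd : 1 ≤ d := by exact_mod_cast (show (1 : ℝ) ≤ d by linarith)
  set u := t + 1
  set v := t + 1 + M
  have hu : 0 < u := by positivity
  have huv : u ≤ v := by linarith
  have hv : 0 < v := hu.trans_le huv
  calc (2 * t + 1) ^ (d - 1) * convKernel s M t ≤ (2 * u) ^ (d - 1) * (u ^ s * v ^ s) := by
        rw [convKernel, Real.mul_rpow hu.le hv.le]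
        gcongr
        linarith
    _ = 2 ^ (d - 1) * (u ^ ((d : ℝ) - 1 + s) * v ^ s) := by
        rw [mul_pow, ← Real.rpow_natCast u, Nat.cast_sub hd, Real.rpow_add hu, Nat.cast_one]
        ring
    _ ≤ 2 ^ (d - 1) * (v ^ ((d : ℝ) - 1 + s) * v ^ s) := by
        gcongr
        linarith
    _ = 2 ^ (d - 1) * (v ^ ((d : ℝ) + 1 + 2 * s) * (v ^ 2)⁻¹) := by
        rw [← Real.rpow_add hv, ← Real.rpow_two, ← Real.rpow_neg hv.le, ← Real.rpow_add hv]
        ring_nf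
    _ ≤ 2 ^ (d - 1) * (M ^ ((d : ℝ) + 1 + 2 * s) * (v ^ 2)⁻¹) := by
        gcongr 2 ^ (d - 1) * (?_ * _)
        exact Real.rpow_le_rpow_of_nonpos hM (by linarith) (by linarith)
    _ = _ := by ring

lemma sum_range_pow_mul_convKernel_le {d : ℕ} (h₁ : 1 - d ≤ s) (h₂ : 2 * s ≤ -1 - d)
    (hM : 0 < M) (n : ℕ) :
    2 * d * ∑ k ∈ range (n + 1), (2 * k + 1 : ℝ) ^ (d - 1) * convKernel s M k ≤
      2 * d * 2 ^ (d - 1) * M ^ ((d : ℝ) + 2 * s) := by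
  calc 2 * d * ∑ k ∈ range (n + 1), (2 * k + 1 : ℝ) ^ (d - 1) * convKernel s M k
      ≤ 2 * d * (2 ^ (d - 1) * M ^ ((d : ℝ) + 1 + 2 * s) *
          ∑ k ∈ range (n + 1), (((k : ℝ) + 1 + M) ^ 2)⁻¹) := by
        gcongr 2 * d * ?_
        rw [mul_sum]
        exact sum_le_sum fun k _ => pow_mul_convKernel_le h₁ h₂ hM k.cast_nonneg
    _ ≤ 2 * d * (2 ^ (d - 1) * M ^ ((d : ℝ) + 1 + 2 * s) * M⁻¹) := by
        gcongr
        exact sum_range_inv_sq_add_le hM _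
    _ = 2 * d * 2 ^ (d - 1) * M ^ ((d : ℝ) + 2 * s) := by
        rw [show (d : ℝ) + 1 + 2 * s = (d + 2 * s) + 1 by ring, Real.rpow_add_one hM.ne']
        field_simp

end ConvKernel

lemma max_latNorm_rpow_mul_le {d : ℕ} {s : ℝ} (hs : s ≤ 0) (x y z : Fin d → ℤ) :
    max (latNorm (x - z)) 1 ^ s * max (latNorm (z - y)) 1 ^ s ≤
      12 ^ (-s) * (convKernel s (latNorm (x - y) + 1) ‖z - x‖ +
        convKernel s (latNorm (x - y) + 1) ‖z - y‖) := by
  have htri : latNorm (x - y) ≤ latNorm (x - z) + latNorm (z - y) := by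
    simpa only [sub_add_sub_cancel] using latNorm_add_le (x - z) (z - y)
  have hK := antitoneOn_convKernel hs (by linarith [latNorm_nonneg (x - y)] :
    0 ≤ latNorm (x - y) + 1)
  rw [← Real.mul_rpow (by positivity) (by positivity)]
  refine (max_one_mul_rpow_le hs (latNorm_nonneg _) (latNorm_nonneg _) (latNorm_nonneg _)
    htri).trans ?_
  gcongr 12 ^ (-s) * (?_ + ?_)
  · exact hK (norm_nonneg _) (latNorm_nonneg _) (by rw [norm_sub_rev]; exact norm_le_latNorm _)
  · exact hK (norm_nonneg _) (latNorm_nonneg _) (norm_le_latNorm _)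

theorem convolution_bound_2d_2d :
    ∀ d : ℕ, 7 ≤ d → ∃ C : ℝ, 0 < C ∧ ∀ x y : Fin d → ℤ,
      Summable (fun z : Fin d → ℤ =>
        max (latNorm (x - z)) 1 ^ ((2 : ℝ) - d) * max (latNorm (z - y)) 1 ^ ((2 : ℝ) - d)) ∧
      (∑' z : Fin d → ℤ,
        max (latNorm (x - z)) 1 ^ ((2 : ℝ) - d) * max (latNorm (z - y)) 1 ^ ((2 : ℝ) - d))
        ≤ C * max (latNorm (x - y)) 1 ^ ((4 : ℝ) - d) := by
  intro d hd
  have : Nonempty (Fin d) := Fin.pos_iff_nonempty.1 (by omega)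
  have hd' : (7 : ℝ) ≤ d := by exact_mod_cast hd
  have hs : (2 : ℝ) - d ≤ 0 := by linarith
  refine ⟨12 ^ (-((2 : ℝ) - d)) * (2 * (2 * d * 2 ^ (d - 1))), by positivity, fun x y => ?_⟩
  set M := latNorm (x - y) + 1
  have hM : 0 < M := by linarith [latNorm_nonneg (x - y)]
  have hkernel (c : Fin d → ℤ) := summable_and_tsum_le_of_sum_latticeBox_le
    (antitoneOn_convKernel hs hM.le) (fun _ => convKernel_nonneg hM.le) (fun n => by
      rw [Fintype.card_fin]
      exact sum_range_pow_mul_convKernel_le (by linarith) (by linarith) hM n) c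
  obtain ⟨hx, hxB⟩ := hkernel x
  obtain ⟨hy, hyB⟩ := hkernel y
  have hdom := (hx.add hy).mul_left (12 ^ (-((2 : ℝ) - d)))
  have hterm := hdom.of_nonneg_of_le (fun z => by positivity) (max_latNorm_rpow_mul_le hs x y)
  refine ⟨hterm, ?_⟩
  calc _ ≤ _ := hterm.tsum_le_tsum (max_latNorm_rpow_mul_le hs x y) hdom
    _ ≤ 12 ^ (-((2 : ℝ) - d)) * (2 * d * 2 ^ (d - 1) * M ^ ((d : ℝ) + 2 * (2 - d)) +
          2 * d * 2 ^ (d - 1) * M ^ ((d : ℝ) + 2 * (2 - d))) := by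
        rw [tsum_mul_left, hx.tsum_add hy]
        gcongr
    _ = 12 ^ (-((2 : ℝ) - d)) * (2 * (2 * d * 2 ^ (d - 1))) * M ^ ((4 : ℝ) - d) := by
        rw [show (d : ℝ) + 2 * (2 - d) = 4 - d by ring]
        ring
    _ ≤ _ := mul_le_mul_of_nonneg_left (Real.rpow_le_rpow_of_nonpos (by positivity)
          (max_le (by linarith) (by linarith [latNorm_nonneg (x - y)])) (by linarith))
          (by positivity)
end

section
/- For every dimension d ≥ 7 there exists a constant C > 0 such that for all x, y ∈ ℤ^d, the sum over z ∈ ℤ^d of (max(|x−z|,1))^{2−d} · (max(|z−y|,1))^{4−d} is at most C · (max(|x−y|,1))^{6−d}. -/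
/-!
Work with the clamped sup norm `N w = max ‖w‖∞ 1`, which is within a factor `√d` of
`max |w| 1`, and in `ℝ≥0∞`, where summability is automatic. The shell `2^k ≤ N w < 2^(k+1)` has
at most `2^((k+2)d)` points, so dyadic summation gives `∑_{N w ≤ R} N w ^ (p - d) ≲ R ^ p` for
`p > 0` and `∑_w max (N w) R ^ t ≲ R ^ (d + t)` for `d + t < 0`. Put `R = N (x - y)`. If
`N (z - y) ≤ R / 2` then `N (x - z) ≥ R / 2`, so the first factor is `≲ R ^ (2 - d)` and a ball
sum around `y` remains; symmetrically near `x`. If `z` is far from both, the product is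
`≲ max (N w) R ^ (6 - 2d)` for the nearer of `w = x - z` and `w = z - y`, and the tail sum applies.
Each of the three contributions is `≲ R ^ (6 - d)`.
-/

open scoped BigOperators

open ENNReal

lemma ENNReal.rpow_le_rpow_of_nonpos {a b : ℝ≥0∞} (hab : a ≤ b) {s : ℝ} (hs : s ≤ 0) :
    b ^ s ≤ a ^ s := by
  rw [← neg_neg s, ENNReal.rpow_neg b, ENNReal.rpow_neg a]
  exact ENNReal.inv_le_inv.mpr (ENNReal.rpow_le_rpow hab (neg_nonneg.mpr hs))

lemma ENNReal.rpow_natCast_add {x : ℝ≥0∞} (h0 : x ≠ 0) (htop : x ≠ ⊤) (n : ℕ) (y : ℝ) :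
    x ^ ((n : ℝ) + y) = x ^ n * x ^ y := by
  rw [ENNReal.rpow_add _ _ h0 htop, ENNReal.rpow_natCast]

lemma ENNReal.rpow_pow_comm (x : ℝ≥0∞) (y : ℝ) (n : ℕ) : (x ^ y) ^ n = (x ^ n) ^ y := by
  rw [← ENNReal.rpow_mul_natCast, mul_comm, ENNReal.rpow_natCast_mul]

lemma ENNReal.sum_range_two_pow_pow_le {m : ℕ} (hm : m ≠ 0) (n : ℕ) :
    ∑ k ∈ Finset.range n, ((2 : ℝ≥0∞) ^ m) ^ k ≤ (2 ^ m) ^ n := by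
  exact_mod_cast (Nat.geomSum_lt (Nat.le_self_pow hm 2) fun k hk => Finset.mem_range.mp hk).le

lemma ENNReal.rpow_le_two_rpow_neg_mul {a b : ℝ≥0∞} (ha : a ≠ 0) (hab : b ≤ 2 * a) {s : ℝ}
    (hs : s ≤ 0) : a ^ s ≤ 2 ^ (-s) * b ^ s := by
  calc a ^ s = 2 ^ (-s) * (2 ^ s * a ^ s) := by
        rw [← mul_assoc, ← ENNReal.rpow_add _ _ two_ne_zero ofNat_ne_top, neg_add_cancel,
          ENNReal.rpow_zero, one_mul]
    _ = 2 ^ (-s) * (2 * a) ^ s := by rw [ENNReal.mul_rpow_of_ne_zero two_ne_zero ha]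
    _ ≤ 2 ^ (-s) * b ^ s := by gcongr 2 ^ (-s) * ?_; exact ENNReal.rpow_le_rpow_of_nonpos hab hs

lemma summable_and_tsum_le_toReal_of_ofReal_le {α : Type*} {f : α → ℝ} {g : α → ℝ≥0∞}
    {c : ℝ≥0∞} (hf : ∀ a, 0 ≤ f a) (hfg : ∀ a, ENNReal.ofReal (f a) ≤ g a)
    (hgc : ∑' a, g a ≤ c) (hc : c ≠ ⊤) :
    Summable f ∧ ∑' a, f a ≤ c.toReal := by
  have hg : ∑' a, g a ≠ ⊤ := ne_top_of_le_ne_top hc hgc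
  have hle (a : α) : f a ≤ (g a).toReal :=
    (ENNReal.ofReal_le_iff_le_toReal (ENNReal.ne_top_of_tsum_ne_top hg a)).mp (hfg a)
  have hsum : Summable f := (ENNReal.summable_toReal hg).of_nonneg_of_le hf hle
  refine ⟨hsum, ?_⟩
  calc ∑' a, f a ≤ ∑' a, (g a).toReal := hsum.tsum_le_tsum hle (ENNReal.summable_toReal hg)
    _ = (∑' a, g a).toReal := (ENNReal.tsum_toReal_eq (ENNReal.ne_top_of_tsum_ne_top hg)).symm
    _ ≤ c.toReal := ENNReal.toReal_mono hc hgc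

namespace LatticeConvolution

variable {d : ℕ}

def supNormClamped (w : Fin d → ℤ) : ℕ := max (Finset.univ.sup fun i => (w i).natAbs) 1

local notation "N" => supNormClamped

lemma one_le_supNormClamped (w : Fin d → ℤ) : 1 ≤ N w := le_max_right _ _

lemma supNormClamped_ne_zero (w : Fin d → ℤ) : N w ≠ 0 :=
  Nat.one_le_iff_ne_zero.mp (one_le_supNormClamped w)

lemma natAbs_le_supNormClamped (w : Fin d → ℤ) (i : Fin d) : (w i).natAbs ≤ N w :=
  (Finset.le_sup (f := fun i => (w i).natAbs) (Finset.mem_univ i)).trans (le_max_left _ _)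

lemma supNormClamped_add_le (u v : Fin d → ℤ) : N (u + v) ≤ N u + N v := by
  refine max_le (Finset.sup_le fun i _ => ?_) ?_
  · calc ((u + v) i).natAbs ≤ (u i).natAbs + (v i).natAbs := Int.natAbs_add_le _ _
      _ ≤ N u + N v := add_le_add (natAbs_le_supNormClamped u i) (natAbs_le_supNormClamped v i)
  · linarith [one_le_supNormClamped u]

lemma supNormClamped_le_max_latNorm (w : Fin d → ℤ) : (N w : ℝ) ≤ max (latNorm w) 1 := by
  have hcoord (i : Fin d) : ((w i).natAbs : ℝ) ≤ latNorm w := by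
    rw [Nat.cast_natAbs, Int.cast_abs]
    exact Real.abs_le_sqrt <|
      Finset.single_le_sum (f := fun j => ((w j : ℝ)) ^ 2) (fun j _ => sq_nonneg _)
        (Finset.mem_univ i)
  have hsup : Finset.univ.sup (fun i => (w i).natAbs) ≤ ⌊latNorm w⌋₊ :=
    Finset.sup_le fun i _ => Nat.le_floor (hcoord i)
  rw [supNormClamped, Nat.cast_max, Nat.cast_one]
  exact max_le_max ((Nat.cast_le.mpr hsup).trans (Nat.floor_le (Real.sqrt_nonneg _))) le_rfl

lemma max_latNorm_le_sqrt_mul_supNormClamped (hd : 0 < d) (w : Fin d → ℤ) :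
    max (latNorm w) 1 ≤ √d * N w := by
  have hsqrt : 1 ≤ √(d : ℝ) := Real.one_le_sqrt.mpr (by exact_mod_cast hd)
  have hN : (1 : ℝ) ≤ N w := by exact_mod_cast one_le_supNormClamped w
  have hsum : ∑ i, ((w i : ℝ)) ^ 2 ≤ d * (N w : ℝ) ^ 2 := by
    simpa using Finset.sum_le_card_nsmul Finset.univ (fun i => ((w i : ℝ)) ^ 2) ((N w : ℝ) ^ 2)
      fun i _ => by
      rw [← sq_abs, ← Int.cast_abs, ← Int.cast_natCast, ← Int.natCast_natAbs]
      gcongr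
      exact_mod_cast natAbs_le_supNormClamped w i
  refine max_le ?_ (by nlinarith)
  calc latNorm w ≤ √(d * (N w : ℝ) ^ 2) := Real.sqrt_le_sqrt hsum
    _ = √d * N w := by rw [Real.sqrt_mul (Nat.cast_nonneg _), Real.sqrt_sq (Nat.cast_nonneg _)]

lemma ofReal_max_latNorm_rpow_le (w : Fin d → ℤ) {s : ℝ} (hs : s ≤ 0) :
    ENNReal.ofReal (max (latNorm w) 1 ^ s) ≤ (N w : ℝ≥0∞) ^ s := by
  have hN : (0 : ℝ) < N w := by exact_mod_cast Nat.pos_of_ne_zero (supNormClamped_ne_zero w)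
  rw [← ENNReal.ofReal_natCast, ENNReal.ofReal_rpow_of_pos hN]
  exact ENNReal.ofReal_le_ofReal
    (Real.rpow_le_rpow_of_nonpos hN (supNormClamped_le_max_latNorm w) hs)

lemma supNormClamped_rpow_le (hd : 0 < d) (w : Fin d → ℤ) {s : ℝ} (hs : s ≤ 0) :
    (N w : ℝ) ^ s ≤ √d ^ (-s) * max (latNorm w) 1 ^ s := by
  have hsqrt : 0 < √(d : ℝ) := Real.sqrt_pos.mpr (by exact_mod_cast hd)
  have hN : (0 : ℝ) < N w := by exact_mod_cast Nat.pos_of_ne_zero (supNormClamped_ne_zero w)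
  calc (N w : ℝ) ^ s = √d ^ (-s) * (√d * N w) ^ s := by
        rw [Real.mul_rpow hsqrt.le hN.le, ← mul_assoc, ← Real.rpow_add hsqrt, neg_add_cancel,
          Real.rpow_zero, one_mul]
    _ ≤ √d ^ (-s) * max (latNorm w) 1 ^ s := by
        gcongr √d ^ (-s) * ?_
        exact Real.rpow_le_rpow_of_nonpos (by positivity)
          (max_latNorm_le_sqrt_mul_supNormClamped hd w) hs

lemma encard_setOf_supNormClamped_lt_le (n : ℕ) :
    {w : Fin d → ℤ | N w < n}.encard ≤ ((2 * n) ^ d : ℕ) := by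
  let box : Finset (Fin d → ℤ) := Fintype.piFinset fun _ => Finset.Ioo (-(n : ℤ)) n
  have hsub : {w : Fin d → ℤ | N w < n} ⊆ box := fun w hw => by
    simp only [box, Finset.coe_Ioo, Fintype.coe_piFinset, Set.mem_pi, Set.mem_univ, Set.mem_Ioo,
      forall_const]
    intro i
    have := (natAbs_le_supNormClamped w i).trans_lt hw
    omega
  calc {w : Fin d → ℤ | N w < n}.encard ≤ (box : Set (Fin d → ℤ)).encard :=
        Set.encard_le_encard hsub
    _ = box.card := Set.encard_coe_eq_coe_finsetCard box
    _ ≤ ((2 * n) ^ d : ℕ) := by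
        simp only [box, Fintype.card_piFinset, Int.card_Ioo, Finset.prod_const,
          Finset.card_univ, Fintype.card_fin, Nat.cast_le]
        exact Nat.pow_le_pow_left (by omega) d

theorem tsum_le_tsum_dyadic {h : ℕ → ℝ≥0∞} (hh : Antitone h) :
    ∑' w : Fin d → ℤ, h (N w) ≤ ∑' k : ℕ, (2 ^ (k + 2)) ^ d * h (2 ^ k) := by
  rw [← ENNReal.tsum_fiberwise _ fun w => Nat.log 2 (N w)]
  refine ENNReal.tsum_le_tsum fun k => ?_
  set shell := (fun w : Fin d → ℤ => Nat.log 2 (N w)) ⁻¹' {k}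
  have hshell : shell ⊆ {w | N w < 2 ^ (k + 1)} := fun w (hw : Nat.log 2 (N w) = k) =>
    hw ▸ Nat.lt_pow_succ_log_self one_lt_two (N w)
  calc ∑' w : shell, h (N (w : Fin d → ℤ)) ≤ ∑' _ : shell, h (2 ^ k) :=
        ENNReal.tsum_le_tsum fun w => hh <| by
          obtain ⟨w, hw : Nat.log 2 (N w) = k⟩ := w
          exact hw ▸ Nat.pow_log_le_self 2 (supNormClamped_ne_zero w)
    _ = shell.encard * h (2 ^ k) := ENNReal.tsum_set_const _ _
    _ ≤ (2 ^ (k + 2)) ^ d * h (2 ^ k) := by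
        gcongr
        calc (shell.encard : ℝ≥0∞) ≤ (((2 * 2 ^ (k + 1)) ^ d : ℕ) : ℕ∞) :=
              ENat.toENNReal_le.mpr ((Set.encard_le_encard hshell).trans
                (encard_setOf_supNormClamped_lt_le _))
          _ = (2 ^ (k + 2)) ^ d := by push_cast; ring

lemma pow_two_pow_add_two_mul_rpow (k : ℕ) (u : ℝ) :
    ((2 : ℝ≥0∞) ^ (k + 2)) ^ d * (2 ^ k) ^ u = 2 ^ (2 * d) * (2 ^ (d + u)) ^ k := by
  calc ((2 : ℝ≥0∞) ^ (k + 2)) ^ d * (2 ^ k) ^ u = 2 ^ (2 * d) * ((2 ^ k) ^ d * (2 ^ k) ^ u) := by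
        rw [pow_add, mul_pow, pow_mul]; ring
    _ = 2 ^ (2 * d) * (2 ^ (d + u)) ^ k := by
        rw [← ENNReal.rpow_natCast_add (pow_ne_zero k two_ne_zero) (pow_ne_top ofNat_ne_top),
          ENNReal.rpow_pow_comm]

theorem tsum_ball_rpow_le {p : ℕ} (hp : 0 < p) (hpd : p ≤ d) {R : ℕ} (hR : R ≠ 0) :
    ∑' w : Fin d → ℤ, (if N w ≤ R then (N w : ℝ≥0∞) ^ ((p : ℝ) - d) else 0)
      ≤ 2 ^ (2 * d + p) * R ^ p := by
  have hexp : (p : ℝ) - d ≤ 0 := by simp [hpd]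
  have hanti : Antitone fun n : ℕ => if n ≤ R then (n : ℝ≥0∞) ^ ((p : ℝ) - d) else 0 := by
    intro a b hab
    dsimp only
    split_ifs with hb ha
    · exact ENNReal.rpow_le_rpow_of_nonpos (Nat.cast_le.mpr hab) hexp
    · omega
    · exact zero_le
    · exact le_rfl
  set K := Nat.log 2 R
  have hterm (k : ℕ) : (2 ^ (k + 2)) ^ d *
      (if 2 ^ k ≤ R then ((2 ^ k : ℕ) : ℝ≥0∞) ^ ((p : ℝ) - d) else 0)
        = if k ≤ K then 2 ^ (2 * d) * (2 ^ p) ^ k else 0 := by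
    by_cases hk : k ≤ K
    · rw [if_pos ((Nat.le_log_iff_pow_le one_lt_two hR).mp hk), if_pos hk, Nat.cast_pow,
        Nat.cast_ofNat, pow_two_pow_add_two_mul_rpow, add_sub_cancel, ENNReal.rpow_natCast]
    · rw [if_neg (mt (Nat.le_log_iff_pow_le one_lt_two hR).mpr hk), if_neg hk, mul_zero]
  refine (tsum_le_tsum_dyadic hanti).trans ?_
  calc ∑' k : ℕ, (2 ^ (k + 2)) ^ d *
        (if 2 ^ k ≤ R then ((2 ^ k : ℕ) : ℝ≥0∞) ^ ((p : ℝ) - d) else 0)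
      = ∑ k ∈ Finset.range (K + 1), 2 ^ (2 * d) * (2 ^ p) ^ k := by
        simp_rw [hterm]
        rw [tsum_eq_sum (s := Finset.range (K + 1)) fun k hk =>
          if_neg (by simpa [Nat.lt_succ_iff] using hk)]
        exact Finset.sum_ite_of_true (fun k hk => Nat.lt_succ_iff.mp (Finset.mem_range.mp hk)) _ _
    _ ≤ 2 ^ (2 * d) * (2 ^ p * (2 ^ K) ^ p) := by
        rw [← Finset.mul_sum]
        gcongr
        exact (ENNReal.sum_range_two_pow_pow_le hp.ne' _).trans_eq (by ring)
    _ ≤ 2 ^ (2 * d + p) * R ^ p := by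
        rw [pow_add, mul_assoc]
        gcongr
        exact_mod_cast Nat.pow_log_le_self 2 hR

lemma sum_range_dyadic_max_rpow_le (hd : 0 < d) {t : ℝ} (ht : t ≤ 0) {R : ℕ} (hR : R ≠ 0) :
    ∑ k ∈ Finset.range (Nat.log 2 R + 1),
        ((2 : ℝ≥0∞) ^ (k + 2)) ^ d * ((max (2 ^ k) R : ℕ) : ℝ≥0∞) ^ t
      ≤ 2 ^ (3 * d) * (R : ℝ≥0∞) ^ (d + t) := by
  have hterm (k : ℕ) : ((2 : ℝ≥0∞) ^ (k + 2)) ^ d * ((max (2 ^ k) R : ℕ) : ℝ≥0∞) ^ t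
      ≤ 2 ^ (2 * d) * (2 ^ d) ^ k * (R : ℝ≥0∞) ^ t :=
    calc ((2 : ℝ≥0∞) ^ (k + 2)) ^ d * ((max (2 ^ k) R : ℕ) : ℝ≥0∞) ^ t
        ≤ (2 ^ (k + 2)) ^ d * (R : ℝ≥0∞) ^ t := by
          gcongr (2 ^ (k + 2)) ^ d * ?_
          exact ENNReal.rpow_le_rpow_of_nonpos (by exact_mod_cast le_max_right _ _) ht
      _ = 2 ^ (2 * d) * (2 ^ d) ^ k * (R : ℝ≥0∞) ^ t := by rw [pow_add, mul_pow, pow_mul]; ring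
  calc _ ≤ ∑ k ∈ Finset.range (Nat.log 2 R + 1), 2 ^ (2 * d) * (2 ^ d) ^ k * (R : ℝ≥0∞) ^ t :=
        Finset.sum_le_sum fun k _ => hterm k
    _ = 2 ^ (2 * d) * (∑ k ∈ Finset.range (Nat.log 2 R + 1), ((2 : ℝ≥0∞) ^ d) ^ k) * R ^ t := by
        rw [Finset.mul_sum, Finset.sum_mul]
    _ ≤ 2 ^ (2 * d) * (2 ^ d * (2 ^ Nat.log 2 R) ^ d) * R ^ t := by
        gcongr
        exact (ENNReal.sum_range_two_pow_pow_le hd.ne' _).trans_eq (by ring)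
    _ ≤ 2 ^ (2 * d) * (2 ^ d * (R : ℝ≥0∞) ^ d) * R ^ t := by
        gcongr
        exact_mod_cast Nat.pow_log_le_self 2 hR
    _ = 2 ^ (3 * d) * (R : ℝ≥0∞) ^ (d + t) := by
        rw [ENNReal.rpow_natCast_add (by exact_mod_cast hR) (natCast_ne_top R)]; ring

lemma tsum_dyadic_max_rpow_tail_le {t : ℝ} (ht : d + t ≤ -1) (R : ℕ) :
    ∑' j, ((2 : ℝ≥0∞) ^ (j + (Nat.log 2 R + 1) + 2)) ^ d *
        ((max (2 ^ (j + (Nat.log 2 R + 1))) R : ℕ) : ℝ≥0∞) ^ t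
      ≤ 2 ^ (2 * d + 1) * (R : ℝ≥0∞) ^ (d + t) := by
  set K := Nat.log 2 R
  have hratio : (2 : ℝ≥0∞) ^ (d + t) ≤ 2⁻¹ := by
    rw [← ENNReal.rpow_neg_one]
    exact ENNReal.rpow_le_rpow_of_exponent_le one_le_two ht
  have hterm (j : ℕ) : ((2 : ℝ≥0∞) ^ (j + (K + 1) + 2)) ^ d *
      ((max (2 ^ (j + (K + 1))) R : ℕ) : ℝ≥0∞) ^ t
        ≤ 2 ^ (2 * d) * (2 ^ (d + t)) ^ (K + 1) * (2 ^ (d + t)) ^ j :=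
    calc _ ≤ ((2 : ℝ≥0∞) ^ (j + (K + 1) + 2)) ^ d * (2 ^ (j + (K + 1))) ^ t := by
          gcongr (2 ^ (j + (K + 1) + 2)) ^ d * ?_
          exact ENNReal.rpow_le_rpow_of_nonpos (by exact_mod_cast le_max_left _ _)
            (by linarith [(Nat.cast_nonneg d : (0 : ℝ) ≤ d)])
      _ = 2 ^ (2 * d) * (2 ^ (d + t)) ^ (K + 1) * (2 ^ (d + t)) ^ j := by
          rw [pow_two_pow_add_two_mul_rpow]; ring
  calc _ ≤ ∑' j, 2 ^ (2 * d) * (2 ^ (d + t)) ^ (K + 1) * ((2 : ℝ≥0∞) ^ (d + t)) ^ j :=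
        ENNReal.tsum_le_tsum hterm
    _ = 2 ^ (2 * d) * (2 ^ (d + t)) ^ (K + 1) * (1 - 2 ^ (d + t))⁻¹ := by
        rw [ENNReal.tsum_mul_left, ENNReal.tsum_geometric]
    _ ≤ 2 ^ (2 * d) * (R : ℝ≥0∞) ^ (d + t) * 2 := by
        gcongr
        · rw [ENNReal.rpow_pow_comm]
          refine ENNReal.rpow_le_rpow_of_nonpos ?_ (by linarith)
          exact_mod_cast (Nat.lt_pow_succ_log_self one_lt_two R).le
        · calc (1 - 2 ^ (d + t))⁻¹ ≤ (1 - (2 : ℝ≥0∞)⁻¹)⁻¹ :=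
              ENNReal.inv_le_inv.mpr (tsub_le_tsub_left hratio 1)
            _ = 2 := by rw [ENNReal.one_sub_inv_two, inv_inv]
    _ = 2 ^ (2 * d + 1) * (R : ℝ≥0∞) ^ (d + t) := by ring

theorem tsum_max_rpow_le (hd : 0 < d) {t : ℝ} (ht : d + t ≤ -1) {R : ℕ} (hR : R ≠ 0) :
    ∑' w : Fin d → ℤ, ((max (N w) R : ℕ) : ℝ≥0∞) ^ t
      ≤ (2 ^ (3 * d) + 2 ^ (2 * d + 1)) * (R : ℝ≥0∞) ^ (d + t) := by
  have ht0 : t ≤ 0 := by linarith [(Nat.cast_nonneg d : (0 : ℝ) ≤ d)]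
  have hanti : Antitone fun n : ℕ => ((max n R : ℕ) : ℝ≥0∞) ^ t := fun a b hab =>
    ENNReal.rpow_le_rpow_of_nonpos (by exact_mod_cast max_le_max_right R hab) ht0
  refine (tsum_le_tsum_dyadic hanti).trans ?_
  rw [← ENNReal.summable.sum_add_tsum_nat_add' (k := Nat.log 2 R + 1), add_mul]
  exact add_le_add (sum_range_dyadic_max_rpow_le hd ht0 hR) (tsum_dyadic_max_rpow_tail_le ht R)

theorem rpow_mul_rpow_le_of_le_add {a b R : ℕ} (ha : a ≠ 0) (hb : b ≠ 0) (hR : R ≤ a + b)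
    {s t : ℝ} (hs : s ≤ 0) (ht : t ≤ 0) :
    (a : ℝ≥0∞) ^ s * (b : ℝ≥0∞) ^ t ≤
      2 ^ (-s) * R ^ s * (if b ≤ R then (b : ℝ≥0∞) ^ t else 0) +
      2 ^ (-t) * R ^ t * (if a ≤ R then (a : ℝ≥0∞) ^ s else 0) +
      2 ^ (-(s + t)) * (((max a R : ℕ) : ℝ≥0∞) ^ (s + t) + ((max b R : ℕ) : ℝ≥0∞) ^ (s + t)) := by
  have half {n m : ℕ} (hn : n ≠ 0) (hm : m ≤ 2 * n) {u : ℝ} (hu : u ≤ 0) :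
      (n : ℝ≥0∞) ^ u ≤ 2 ^ (-u) * (m : ℝ≥0∞) ^ u :=
    ENNReal.rpow_le_two_rpow_neg_mul (by exact_mod_cast hn) (by exact_mod_cast hm) hu
  have hpow_add {n : ℕ} (hn : n ≠ 0) : (n : ℝ≥0∞) ^ s * (n : ℝ≥0∞) ^ t = (n : ℝ≥0∞) ^ (s + t) :=
    (ENNReal.rpow_add _ _ (by exact_mod_cast hn) (natCast_ne_top n)).symm
  rcases le_or_gt (2 * b) R with hbR | hbR
  · refine le_add_right (le_add_right ?_)
    rw [if_pos (by omega)]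
    gcongr
    exact half ha (by omega) hs
  rcases le_or_gt (2 * a) R with haR | haR
  · refine le_add_right (le_add_left ?_)
    rw [if_pos (by omega), mul_comm ((a : ℝ≥0∞) ^ s)]
    gcongr
    exact half hb (by omega) ht
  refine le_add_left ?_
  rcases le_total a b with hab | hab
  · calc (a : ℝ≥0∞) ^ s * (b : ℝ≥0∞) ^ t ≤ (a : ℝ≥0∞) ^ s * (a : ℝ≥0∞) ^ t := by
          gcongr (a : ℝ≥0∞) ^ s * ?_
          exact ENNReal.rpow_le_rpow_of_nonpos (by exact_mod_cast hab) ht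
      _ ≤ 2 ^ (-(s + t)) * ((max a R : ℕ) : ℝ≥0∞) ^ (s + t) := by
          rw [hpow_add ha]
          exact half ha (by omega) (by linarith)
      _ ≤ _ := by gcongr; exact le_self_add
  · calc (a : ℝ≥0∞) ^ s * (b : ℝ≥0∞) ^ t ≤ (b : ℝ≥0∞) ^ s * (b : ℝ≥0∞) ^ t := by
          gcongr ?_ * (b : ℝ≥0∞) ^ t
          exact ENNReal.rpow_le_rpow_of_nonpos (by exact_mod_cast hab) hs
      _ ≤ 2 ^ (-(s + t)) * ((max b R : ℕ) : ℝ≥0∞) ^ (s + t) := by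
          rw [hpow_add hb]
          exact half hb (by omega) (by linarith)
      _ ≤ _ := by gcongr; exact le_add_self

theorem tsum_rpow_mul_rpow_le {s t : ℝ} (hs : s ≤ 0) (ht : t ≤ 0) {x y : Fin d → ℤ} {R : ℕ}
    (hR : R ≤ N (x - y)) :
    ∑' z : Fin d → ℤ, (N (x - z) : ℝ≥0∞) ^ s * (N (z - y) : ℝ≥0∞) ^ t ≤
      2 ^ (-s) * R ^ s * ∑' w : Fin d → ℤ, (if N w ≤ R then (N w : ℝ≥0∞) ^ t else 0) +
      2 ^ (-t) * R ^ t * ∑' w : Fin d → ℤ, (if N w ≤ R then (N w : ℝ≥0∞) ^ s else 0) +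
      2 ^ (-(s + t)) * (2 * ∑' w : Fin d → ℤ, ((max (N w) R : ℕ) : ℝ≥0∞) ^ (s + t)) := by
  have hsubRight (F : (Fin d → ℤ) → ℝ≥0∞) : ∑' z, F (z - y) = ∑' w, F w :=
    (Equiv.subRight y).tsum_eq F
  have hsubLeft (F : (Fin d → ℤ) → ℝ≥0∞) : ∑' z, F (x - z) = ∑' w, F w :=
    (Equiv.subLeft x).tsum_eq F
  set ballS : (Fin d → ℤ) → ℝ≥0∞ := fun w => if N w ≤ R then (N w : ℝ≥0∞) ^ s else 0
  set ballT : (Fin d → ℤ) → ℝ≥0∞ := fun w => if N w ≤ R then (N w : ℝ≥0∞) ^ t else 0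
  set tail : (Fin d → ℤ) → ℝ≥0∞ := fun w => ((max (N w) R : ℕ) : ℝ≥0∞) ^ (s + t)
  have hsplit (z : Fin d → ℤ) : (N (x - z) : ℝ≥0∞) ^ s * (N (z - y) : ℝ≥0∞) ^ t ≤
      2 ^ (-s) * R ^ s * ballT (z - y) + 2 ^ (-t) * R ^ t * ballS (x - z) +
        2 ^ (-(s + t)) * (tail (x - z) + tail (z - y)) :=
    rpow_mul_rpow_le_of_le_add (supNormClamped_ne_zero _) (supNormClamped_ne_zero _)
      (hR.trans (by simpa using supNormClamped_add_le (x - z) (z - y))) hs ht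
  calc _ ≤ _ := ENNReal.tsum_le_tsum hsplit
    _ = _ := by simp only [ENNReal.tsum_add, ENNReal.tsum_mul_left, hsubRight, hsubLeft, two_mul]

theorem exists_tsum_rpow_mul_rpow_le {p q : ℕ} (hp : 0 < p) (hq : 0 < q) (hpqd : p + q < d) :
    ∃ C : ℝ≥0∞, C ≠ ⊤ ∧ ∀ x y : Fin d → ℤ,
      ∑' z : Fin d → ℤ, (N (x - z) : ℝ≥0∞) ^ ((p : ℝ) - d) * (N (z - y) : ℝ≥0∞) ^ ((q : ℝ) - d)
        ≤ C * (N (x - y) : ℝ≥0∞) ^ ((p : ℝ) + q - d) := by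
  set s : ℝ := p - d
  set t : ℝ := q - d
  have hs : s ≤ 0 := by simp only [s, sub_nonpos, Nat.cast_le]; omega
  have ht : t ≤ 0 := by simp only [t, sub_nonpos, Nat.cast_le]; omega
  have hst : (d : ℝ) + (s + t) ≤ -1 := by
    have : ((p + q + 1 : ℕ) : ℝ) ≤ d := by exact_mod_cast hpqd
    push_cast at this
    linarith
  set c₁ : ℝ≥0∞ := 2 ^ (-s) * 2 ^ (2 * d + q)
  set c₂ : ℝ≥0∞ := 2 ^ (-t) * 2 ^ (2 * d + p)
  set c₃ : ℝ≥0∞ := 2 ^ (-(s + t)) * (2 * (2 ^ (3 * d) + 2 ^ (2 * d + 1)))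
  refine ⟨c₁ + c₂ + c₃, by finiteness, fun x y => ?_⟩
  set R := N (x - y)
  have hR : R ≠ 0 := supNormClamped_ne_zero _
  have hR0 : (R : ℝ≥0∞) ≠ 0 := by exact_mod_cast hR
  have hexp₁ : (R : ℝ≥0∞) ^ s * R ^ q = R ^ ((p : ℝ) + q - d) := by
    rw [mul_comm, ← ENNReal.rpow_natCast_add hR0 (natCast_ne_top R)]; congr 1; simp only [s]; ring
  have hexp₂ : (R : ℝ≥0∞) ^ t * R ^ p = R ^ ((p : ℝ) + q - d) := by
    rw [mul_comm, ← ENNReal.rpow_natCast_add hR0 (natCast_ne_top R)]; congr 1; simp only [t]; ring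
  have hexp₃ : (R : ℝ≥0∞) ^ ((d : ℝ) + (s + t)) = R ^ ((p : ℝ) + q - d) := by
    congr 1; simp only [s, t]; ring
  calc _ ≤ _ := tsum_rpow_mul_rpow_le hs ht le_rfl
    _ ≤ 2 ^ (-s) * R ^ s * (2 ^ (2 * d + q) * R ^ q) +
          2 ^ (-t) * R ^ t * (2 ^ (2 * d + p) * R ^ p) +
          2 ^ (-(s + t)) * (2 * ((2 ^ (3 * d) + 2 ^ (2 * d + 1)) * R ^ ((d : ℝ) + (s + t)))) := by
        gcongr
        · exact tsum_ball_rpow_le hq (by omega) hR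
        · exact tsum_ball_rpow_le hp (by omega) hR
        · exact tsum_max_rpow_le (by omega) hst hR
    _ = c₁ * (R ^ s * R ^ q) + c₂ * (R ^ t * R ^ p) + c₃ * R ^ ((d : ℝ) + (s + t)) := by ring
    _ = (c₁ + c₂ + c₃) * R ^ ((p : ℝ) + q - d) := by rw [hexp₁, hexp₂, hexp₃]; ring

end LatticeConvolution

open LatticeConvolution

theorem convolution_bound_2d_4d :
    ∀ d : ℕ, 7 ≤ d → ∃ C : ℝ, 0 < C ∧ ∀ x y : Fin d → ℤ,
      Summable (fun z : Fin d → ℤ =>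
        max (latNorm (x - z)) 1 ^ ((2 : ℝ) - d) * max (latNorm (z - y)) 1 ^ ((4 : ℝ) - d)) ∧
      (∑' z : Fin d → ℤ,
        max (latNorm (x - z)) 1 ^ ((2 : ℝ) - d) * max (latNorm (z - y)) 1 ^ ((4 : ℝ) - d))
        ≤ C * max (latNorm (x - y)) 1 ^ ((6 : ℝ) - d) := by
  intro d hd
  have hd' : (7 : ℝ) ≤ d := by exact_mod_cast hd
  obtain ⟨C, hC, hbound⟩ := exists_tsum_rpow_mul_rpow_le (d := d) two_pos four_pos (by omega)
  norm_num at hbound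
  refine ⟨(C.toReal + 1) * √d ^ ((d : ℝ) - 6),
    mul_pos (by positivity) (Real.rpow_pos_of_pos (Real.sqrt_pos.mpr (by positivity)) _),
    fun x y => ?_⟩
  have hterm (z : Fin d → ℤ) : ENNReal.ofReal
      (max (latNorm (x - z)) 1 ^ ((2 : ℝ) - d) * max (latNorm (z - y)) 1 ^ ((4 : ℝ) - d)) ≤
      (supNormClamped (x - z) : ℝ≥0∞) ^ ((2 : ℝ) - d) *
        (supNormClamped (z - y) : ℝ≥0∞) ^ ((4 : ℝ) - d) := by
    rw [ENNReal.ofReal_mul (by positivity)]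
    exact mul_le_mul' (ofReal_max_latNorm_rpow_le _ (by linarith))
      (ofReal_max_latNorm_rpow_le _ (by linarith))
  obtain ⟨hsum, hle⟩ := summable_and_tsum_le_toReal_of_ofReal_le (fun z => by positivity) hterm
    (hbound x y) (ENNReal.mul_ne_top hC (ENNReal.rpow_ne_top_of_ne_zero
      (Nat.cast_ne_zero.mpr (supNormClamped_ne_zero _)) (natCast_ne_top _)))
  refine ⟨hsum, hle.trans ?_⟩
  rw [ENNReal.toReal_mul, ← ENNReal.toReal_rpow, ENNReal.toReal_natCast, mul_assoc]
  gcongr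
  · linarith
  · simpa using supNormClamped_rpow_le (by omega) (x - y) (s := (6 : ℝ) - d) (by linarith)
end
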